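/- Reordering lemma (Lemma 5.2): let G^U ⊂ ℤ^d × [0,∞) × [0,1] be finite with pairwise distinct times, let G be its projection to ℤ^d × [0,∞), and let A, B be a partition of G^U such that for no (x₁,t₁,u₁) ∈ A and (x₂,t₂,u₂) ∈ B one has (x₂,t₂) <_G (x₁,t₁) (in words: A does not happen after B). Then for every η ∈ Ω, Ψ(η, G^U) = Ψ(Ψ(η, A), B). -/

import Mathlib

/-!
Since a rate `c₊(x, ·)` only reads the nearest neighbours of `x`, resampling steps at two sites
that are neither equal nor adjacent commute. Induct on the time-sorted list: if its earliest
event `e` belongs to `B`, every event of `A` happens later, and a one-link chain shows that its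
site is apart from that of `e`; so `e` can be moved past all of `A`.
-/

/-- Sites of the lattice `ℤ^d`. -/
abbrev Site (d : ℕ) := Fin d → ℤ

/-- Spin configurations on `ℤ^d`; `true` encodes spin `+1`, `false` encodes spin `-1`. -/
abbrev Config (d : ℕ) := Site d → Bool

/-- A labelled resampling event `(x, t, u)`: site, time, uniform label. -/
abbrev Event (d : ℕ) := Site d × ℝ × ℝ

/-- ℓ¹ distance on `ℤ^d`. -/
def dist1 {d : ℕ} (x y : Site d) : ℤ := ∑ i, |x i - y i|

/-- Single heat-bath resampling step `Ψ(η,(x,u))`. -/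
noncomputable def step {d : ℕ} (cplus : Site d → Config d → ℝ) (η : Config d)
    (x : Site d) (u : ℝ) : Config d :=
  fun y => if y = x then (if u < cplus x η then true else false) else η y

/-- `Ψ(η, G^U)` for a finite labelled event set, represented by a list of events which is
assumed to be sorted by (pairwise distinct) times: the resampling steps are applied
successively, front of the list (earliest time) first. -/
noncomputable def applyEvents {d : ℕ} (cplus : Site d → Config d → ℝ)
    (η : Config d) : List (Event d) → Config d
  | [] => η
  | e :: rest => applyEvents cplus (step cplus η e.1 e.2.2) rest

/-- The projection `G` of a labelled event set `G^U` onto `ℤ^d × [0,∞)`. -/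
def projG {d : ℕ} (l : List (Event d)) : Set (Site d × ℝ) :=
  {p | ∃ u : ℝ, (p.1, p.2, u) ∈ l}

/-- The relation `<_G` on `ℤ^d × [0,∞)`. -/
def rel {d : ℕ} (G : Set (Site d × ℝ)) (p q : Site d × ℝ) : Prop :=
  (p.1 = q.1 ∧ p.2 < q.2) ∨
  ∃ (K : ℕ) (c : Fin (K + 1) → Site d × ℝ),
    (∀ m, c m ∈ G) ∧
    p.2 < (c 0).2 ∧
    (∀ m : Fin K, (c m.castSucc).2 < (c m.succ).2) ∧
    (c (Fin.last K)).2 ≤ q.2 ∧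
    dist1 (c 0).1 p.1 = 1 ∧
    (∀ m : Fin K, dist1 (c m.succ).1 (c m.castSucc).1 = 1) ∧
    (c (Fin.last K)).1 = q.1

theorem List.Sublist.eq_filter_of_nodup {α : Type*} {l s : List α} (hl : l.Nodup)
    (hs : s.Sublist l) {p : α → Bool} (hp : ∀ x ∈ l, x ∈ s ↔ p x) : s = l.filter p := by
  have hsub : s.Sublist (l.filter p) := by
    simpa [List.filter_eq_self.mpr fun x hx => (hp x (hs.subset hx)).mp hx] using hs.filter p
  refine hsub.eq_of_length (List.Perm.length_eq ?_)
  refine (List.perm_ext_iff_of_nodup (hl.sublist hs) (hl.filter p)).mpr fun x => ?_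
  rw [List.mem_filter]
  exact ⟨fun hx => ⟨hs.subset hx, (hp x (hs.subset hx)).mp hx⟩,
    fun ⟨hx, hpx⟩ => (hp x hx).mpr hpx⟩

theorem dist1_comm {d : ℕ} (x y : Site d) : dist1 x y = dist1 y x :=
  Finset.sum_congr rfl fun _ _ => abs_sub_comm _ _

def Apart {d : ℕ} (x y : Site d) : Prop := x ≠ y ∧ dist1 x y ≠ 1

theorem Apart.symm {d : ℕ} {x y : Site d} (h : Apart x y) : Apart y x :=
  ⟨h.1.symm, dist1_comm x y ▸ h.2⟩

theorem apart_of_not_rel {d : ℕ} {l : List (Event d)} {a b : Event d} (ha : a ∈ l)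
    (hlt : b.2.1 < a.2.1) (hrel : ¬ rel (projG l) (b.1, b.2.1) (a.1, a.2.1)) :
    Apart a.1 b.1 := by
  refine ⟨fun h => hrel (Or.inl ⟨h.symm, hlt⟩), fun h => hrel (Or.inr ?_)⟩
  exact ⟨0, fun _ => (a.1, a.2.1), fun _ => ⟨a.2.2, by simpa using ha⟩, hlt,
    Fin.elim0, le_rfl, h, Fin.elim0, rfl⟩

section Reordering

variable {d : ℕ} {cplus : Site d → Config d → ℝ}
  (hNN : ∀ (x : Site d) (η η' : Config d),
    (∀ y, dist1 y x = 1 → η y = η' y) → cplus x η = cplus x η')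
include hNN

theorem cplus_step_of_apart {x y : Site d} (h : Apart x y) (η : Config d) (u : ℝ) :
    cplus x (step cplus η y u) = cplus x η :=
  hNN x _ _ fun w hw => if_neg fun hwy => h.2 (by rw [dist1_comm, ← hwy, hw])

theorem step_comm_of_apart {x y : Site d} (h : Apart x y) (η : Config d) (u v : ℝ) :
    step cplus (step cplus η x u) y v = step cplus (step cplus η y v) x u := by
  have hy := cplus_step_of_apart hNN h.symm η u
  have hx := cplus_step_of_apart hNN h η v
  funext z
  unfold step at hx hy ⊢
  rw [hx, hy]
  by_cases hzy : z = y
  · simp [hzy, Ne.symm h.1]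
  · simp [hzy]

theorem applyEvents_step_comm {x : Site d} (u : ℝ) {A : List (Event d)}
    (h : ∀ a ∈ A, Apart a.1 x) (η : Config d) :
    applyEvents cplus (step cplus η x u) A = step cplus (applyEvents cplus η A) x u := by
  induction A generalizing η with
  | nil => rfl
  | cons a A ih =>
    simp only [applyEvents]
    rw [step_comm_of_apart hNN (h a List.mem_cons_self).symm,
      ih (fun b hb => h b (List.mem_cons_of_mem _ hb))]

theorem applyEvents_eq_applyEvents_filter {l : List (Event d)}
    (hsort : l.Pairwise (fun a b => a.2.1 < b.2.1)) (p : Event d → Bool)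
    (hapart : ∀ a ∈ l, ∀ b ∈ l, p a → ¬ p b → b.2.1 < a.2.1 → Apart a.1 b.1)
    (η : Config d) :
    applyEvents cplus η l =
      applyEvents cplus (applyEvents cplus η (l.filter p)) (l.filter fun e => !p e) := by
  induction l generalizing η with
  | nil => rfl
  | cons e l ih =>
    obtain ⟨hlt, hsort⟩ := List.pairwise_cons.mp hsort
    have ih := ih hsort fun a ha b hb => hapart a (List.mem_cons_of_mem _ ha) b
      (List.mem_cons_of_mem _ hb)
    by_cases he : p e
    · simp only [List.filter_cons, he, if_true, Bool.not_true, applyEvents]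
      exact ih _
    · have hfar : ∀ a ∈ l.filter p, Apart a.1 e.1 := fun a ha =>
        have ha := List.mem_filter.mp ha
        hapart a (List.mem_cons_of_mem _ ha.1) e List.mem_cons_self ha.2 he (hlt a ha.1)
      simp only [List.filter_cons, he, Bool.false_eq_true, if_false, Bool.not_false, if_true,
        applyEvents]
      rw [← applyEvents_step_comm hNN _ hfar]
      exact ih _

end Reordering

theorem stmt3_general {d : ℕ} (cplus : Site d → Config d → ℝ)
    (hNN : ∀ (x : Site d) (η η' : Config d),
      (∀ y, dist1 y x = 1 → η y = η' y) → cplus x η = cplus x η')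
    (l : List (Event d))
    (hsort : l.Pairwise (fun a b => a.2.1 < b.2.1))
    (A B : List (Event d)) (hA : A.Sublist l) (hB : B.Sublist l)
    (hcover : ∀ e : Event d, e ∈ l ↔ (e ∈ A ∨ e ∈ B))
    (hdisj : ∀ e : Event d, ¬ (e ∈ A ∧ e ∈ B))
    (hnoafter : ∀ a ∈ A, ∀ b ∈ B, ¬ rel (projG l) (b.1, b.2.1) (a.1, a.2.1))
    (η : Config d) :
    applyEvents cplus η l = applyEvents cplus (applyEvents cplus η A) B := by
  classical
  have hnodup : l.Nodup := hsort.imp fun hlt heq => hlt.ne (congrArg (·.2.1) heq)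
  have hA_eq : A = l.filter (· ∈ A) := hA.eq_filter_of_nodup hnodup fun x _ => by simp
  have hB_eq : B = l.filter fun e => !decide (e ∈ A) :=
    hB.eq_filter_of_nodup hnodup fun x hx => by
      simpa using ⟨fun hxB hxA => hdisj x ⟨hxA, hxB⟩, ((hcover x).mp hx).resolve_left⟩
  have hsplit := applyEvents_eq_applyEvents_filter hNN hsort (· ∈ A) (η := η)
    fun a _ b hb ha hbA hlt => by
      have hbB : b ∈ B := ((hcover b).mp hb).resolve_left (by simpa using hbA)
      have haA : a ∈ A := by simpa using ha
      exact apart_of_not_rel (hA.subset haA) hlt (hnoafter a haA b hbB)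
  rwa [← hA_eq, ← hB_eq] at hsplit

/-- Reordering lemma (Lemma 5.2): if `A`, `B` is a partition of the finite labelled event
set `G^U` (all lists sorted by pairwise distinct times) such that no event of `B` happens
`<_G`-before an event of `A`, then `Ψ(η, G^U) = Ψ(Ψ(η, A), B)`. -/
theorem stmt3 {d : ℕ} (hd : 1 ≤ d) (cplus : Site d → Config d → ℝ)
    (hrange : ∀ x η, cplus x η ∈ Set.Icc (0 : ℝ) 1)
    (hNN : ∀ (x : Site d) (η η' : Config d),
      (∀ y, dist1 y x = 1 → η y = η' y) → cplus x η = cplus x η')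
    (l : List (Event d))
    (hsort : l.Pairwise (fun a b => a.2.1 < b.2.1))
    (htime : ∀ e ∈ l, 0 ≤ e.2.1)
    (hu : ∀ e ∈ l, e.2.2 ∈ Set.Icc (0 : ℝ) 1)
    (A B : List (Event d)) (hA : A.Sublist l) (hB : B.Sublist l)
    (hcover : ∀ e : Event d, e ∈ l ↔ (e ∈ A ∨ e ∈ B))
    (hdisj : ∀ e : Event d, ¬ (e ∈ A ∧ e ∈ B))
    (hnoafter : ∀ a ∈ A, ∀ b ∈ B, ¬ rel (projG l) (b.1, b.2.1) (a.1, a.2.1))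
    (η : Config d) :
    applyEvents cplus η l = applyEvents cplus (applyEvents cplus η A) B :=
  stmt3_general cplus hNN l hsort A B hA hB hcover hdisj hnoafter η
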